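/- arXiv:1905.10543 — 7 statements merged into one kernel-verified Lean document; each statement's English description precedes it below -/
import Mathlib

section
/- Let E be a Banach lattice and X a Banach space. Every weakly compact operator T : E → X is a KB-operator, i.e., for every positive increasing sequence (x_n) in the closed unit ball of E, the sequence (T x_n) has a norm-convergent subsequence in X. -/
open Filter Topology Metric

/-!
We show that `(T xₙ)` is Cauchy. Otherwise there are `ε > 0` and indices `p₀ ≤ p₁ ≤ ⋯` such that
the increments `yₖ = T (x_{pₖ₊₁} - x_{pₖ})` satisfy `‖yₖ‖ ≥ ε`. The increments
`x_{pₖ₊₁} - x_{pₖ}` are positive, so every finite sum of them lies between `0` and some `x_n`,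
hence in the unit ball by solidity of the norm. Thus all finite subsums of `∑ yₖ` lie in
`T (B_E)`, whose weak closure is compact, and every subseries of `∑ yₖ` converges weakly.

This forces `‖yₖ‖ → 0`, by a gliding hump: take norming functionals `fₖ` of the `yₖ` and a
weak-* cluster point `g` of them, and extract `m` so that `f_{m l} - g` is almost zero on every
`y_{m i}` with `i ≠ l`. If `s` is the weak sum of `∑ y_{m i}`, then `(f_{m l} - g) s ≥ 3ε/8` for
all `l`, so a weak-* cluster point `g'` of the `f_{m l}` has `(g' - g) s ≥ 3ε/8`; but `g' - g` is
almost zero on every `y_{m i}`, so `(g' - g) s ≤ ε/8`.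
-/

theorem exists_seq_of_forall_fin_exists {α : Type*} (P : (n : ℕ) → (Fin n → α) → α → Prop)
    (h : ∀ n u, ∃ a, P n u a) : ∃ m : ℕ → α, ∀ n, P n (fun i => m i) (m n) := by
  choose F hF using h
  refine ⟨Nat.strongRec fun n ih => F n fun i => ih i i.2, fun n => ?_⟩
  dsimp only
  rw [Nat.strongRec_eq]
  exact hF _ _

theorem exists_monotone_le_dist_of_not_cauchySeq {α : Type*} [PseudoMetricSpace α] {u : ℕ → α}
    (hu : ¬CauchySeq u) :
    ∃ ε > 0, ∃ p : ℕ → ℕ, Monotone p ∧ ∀ k, ε ≤ dist (u (p (k + 1))) (u (p k)) := by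
  rw [Metric.cauchySeq_iff'] at hu
  push Not at hu
  obtain ⟨ε, hε, hN⟩ := hu
  choose q hq_ge hq_dist using hN
  refine ⟨ε, hε, fun k => q^[k] 0, monotone_nat_of_le_succ fun k => ?_, fun k => ?_⟩
  · simp only [Function.iterate_succ_apply']
    exact hq_ge _
  · simp only [Function.iterate_succ_apply']
    exact hq_dist _

theorem norm_sum_sub_le_of_monotone {E : Type*} [NormedAddCommGroup E] [Lattice E]
    [IsOrderedAddMonoid E] [HasSolidNorm E] {x : ℕ → E} (h0 : 0 ≤ x 0) (hx : Monotone x)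
    {F : Finset ℕ} {n : ℕ} (hF : F ⊆ Finset.range n) :
    ‖∑ k ∈ F, (x (k + 1) - x k)‖ ≤ ‖x n‖ := by
  have hinc : ∀ k, 0 ≤ x (k + 1) - x k := fun k => sub_nonneg.2 (hx k.le_succ)
  have hsum_le : ∑ k ∈ F, (x (k + 1) - x k) ≤ x n :=
    calc ∑ k ∈ F, (x (k + 1) - x k) ≤ ∑ k ∈ Finset.range n, (x (k + 1) - x k) :=
          Finset.sum_le_sum_of_subset_of_nonneg hF fun k _ _ => hinc k
      _ = x n - x 0 := Finset.sum_range_sub x n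
      _ ≤ x n := sub_le_self _ h0
  apply norm_le_norm_of_abs_le_abs
  rw [abs_of_nonneg (Finset.sum_nonneg fun k _ => hinc k), abs_of_nonneg (h0.trans (hx n.zero_le))]
  exact hsum_le

theorem abs_tsum_sub_le_of_forall_ne {β : Type*} [DecidableEq β] {e δ : β → ℝ} {D : ℝ}
    (he : Summable e) (hδ : HasSum δ D) (hδ0 : ∀ i, 0 ≤ δ i) (b : β)
    (h : ∀ i ≠ b, |e i| ≤ δ i) : |∑' i, e i - e b| ≤ D := by
  rw [he.tsum_eq_add_tsum_ite b, add_sub_cancel_left]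
  refine tsum_of_norm_bounded (f := fun i => if i = b then 0 else e i) hδ fun i => ?_
  split_ifs with hi
  · simpa using hδ0 i
  · exact h i hi

section WeakTopology

variable {X : Type*} [NormedAddCommGroup X] [NormedSpace ℝ X]

theorem summable_apply_of_norm_sum_le {ι : Type*} {y : ι → X} {C : ℝ}
    (hy : ∀ F : Finset ι, ‖∑ i ∈ F, y i‖ ≤ C) (f : StrongDual ℝ X) :
    Summable fun i => f (y i) := by
  classical
  have hbound (F : Finset ι) : |f (∑ i ∈ F, y i)| ≤ ‖f‖ * C :=
    (f.le_opNorm _).trans (mul_le_mul_of_nonneg_left (hy F) (norm_nonneg f))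
  refine Summable.of_abs <|
    summable_of_sum_le (c := 2 * (‖f‖ * C)) (fun i => abs_nonneg _) fun F => ?_
  have hsplit : ∑ i ∈ F, |f (y i)| =
      f (∑ i ∈ F with 0 ≤ f (y i), y i) - f (∑ i ∈ F with ¬0 ≤ f (y i), y i) := by
    rw [map_sum, map_sum, ← Finset.sum_filter_add_sum_filter_not F (fun i => 0 ≤ f (y i)),
      sub_eq_add_neg, ← Finset.sum_neg_distrib]
    congr 1 <;> refine Finset.sum_congr rfl fun i hi => ?_
    · exact abs_of_nonneg (Finset.mem_filter.1 hi).2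
    · exact abs_of_neg (not_le.1 (Finset.mem_filter.1 hi).2)
  have hpos := abs_le.1 (hbound (F.filter fun i => 0 ≤ f (y i)))
  have hneg := abs_le.1 (hbound (F.filter fun i => ¬0 ≤ f (y i)))
  linarith

theorem exists_apply_eq_of_isCompact_weakSpace {ι : Type*} {l : Filter ι} [l.NeBot]
    {K : Set (WeakSpace ℝ X)} (hK : IsCompact K) {s : ι → X}
    (hs : ∀ i, toWeakSpace ℝ X (s i) ∈ K) {L : StrongDual ℝ X → ℝ}
    (hL : ∀ f, Tendsto (fun i => f (s i)) l (𝓝 (L f))) :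
    ∃ a : X, ∀ f : StrongDual ℝ X, f a = L f := by
  obtain ⟨w, -, hw⟩ := hK.exists_mapClusterPt (f := l) (u := fun i => toWeakSpace ℝ X (s i))
    (le_principal_iff.2 (mem_map.2 (univ_mem' hs)))
  refine ⟨(toWeakSpace ℝ X).symm w, fun f => ?_⟩
  have hcont : Continuous fun w : WeakSpace ℝ X => f ((toWeakSpace ℝ X).symm w) :=
    WeakBilin.eval_continuous _ f
  exact eq_of_nhds_neBot ((hw.continuousAt_comp hcont.continuousAt).clusterPt.mono (hL f))

theorem exists_mapClusterPt_toWeakDual {ι : Type*} {l : Filter ι} [l.NeBot]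
    {f : ι → StrongDual ℝ X} {C : ℝ} (hf : ∀ i, ‖f i‖ ≤ C) :
    ∃ g : WeakDual ℝ X, MapClusterPt g l fun i => StrongDual.toWeakDual (f i) := by
  have hball (i : ι) : StrongDual.toWeakDual (f i) ∈ WeakDual.toStrongDual ⁻¹' closedBall 0 C := by
    simpa using hf i
  obtain ⟨g, -, hg⟩ := (WeakDual.isCompact_closedBall (0 : StrongDual ℝ X) C).exists_mapClusterPt
    (f := l) (le_principal_iff.2 (mem_map.2 (univ_mem' hball)))
  exact ⟨g, hg⟩

theorem exists_strictMono_forall_ne_dist_lt {f : ℕ → StrongDual ℝ X} {g : WeakDual ℝ X}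
    (hg : MapClusterPt g atTop fun k => StrongDual.toWeakDual (f k)) {y : ℕ → X}
    (hy : ∀ φ : StrongDual ℝ X, Tendsto (fun k => φ (y k)) atTop (𝓝 0)) {P : ℕ → Prop}
    (hP : ∀ᶠ k in atTop, P k) {δ : ℕ → ℝ} (hδ : ∀ i, 0 < δ i) :
    ∃ m : ℕ → ℕ, StrictMono m ∧ (∀ l, P (m l)) ∧
      ∀ l i, i ≠ l → dist (f (m l) (y (m i))) (g (y (m i))) < δ i := by
  -- `m n` is chosen close to `g` on the earlier `y (m i)` (possible frequently, as `g` is a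
  -- cluster point) and so late that the earlier `f (m i) - g` are small on `y (m n)`.
  have hfreq (n : ℕ) (u : Fin n → ℕ) :
      ∃ᶠ k in atTop, ∀ i : Fin n, dist (f k (y (u i))) (g (y (u i))) < δ i :=
    hg.frequently (eventually_all.2 fun i =>
      (WeakDual.eval_continuous (y (u i))).continuousAt.eventually (ball_mem_nhds _ (hδ i)))
  have hev (n : ℕ) (u : Fin n → ℕ) :
      ∀ᶠ k in atTop, P k ∧ ∀ i : Fin n, u i < k ∧ dist (f (u i) (y k)) (g (y k)) < δ n := by
    refine hP.and (eventually_all.2 fun i => (eventually_gt_atTop _).and ?_)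
    have := (hy (f (u i))).dist (hy (WeakDual.toStrongDual g))
    rw [dist_self] at this
    exact this.eventually_lt_const (hδ n)
  obtain ⟨m, hm⟩ := exists_seq_of_forall_fin_exists
    (fun n u k => P k ∧ ∀ i : Fin n, u i < k ∧ dist (f k (y (u i))) (g (y (u i))) < δ i ∧
      dist (f (u i) (y k)) (g (y k)) < δ n)
    fun n u => ((hfreq n u).and_eventually (hev n u)).exists.imp fun k ⟨hnear, hP, hlate⟩ =>
      ⟨hP, fun i => ⟨(hlate i).1, hnear i, (hlate i).2⟩⟩
  refine ⟨m, strictMono_nat_of_lt_succ fun n => ((hm (n + 1)).2 (Fin.last n)).1,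
    fun l => (hm l).1, fun l i hil => ?_⟩
  rcases hil.lt_or_gt with h | h
  · exact ((hm l).2 ⟨i, h⟩).2.1
  · exact ((hm i).2 ⟨l, h⟩).2.2

def WeaklySubseriesConvergent (y : ℕ → X) : Prop :=
  ∀ m : ℕ → ℕ, StrictMono m → ∃ s : X, ∀ f : StrongDual ℝ X, HasSum (fun i => f (y (m i))) (f s)

theorem weaklySubseriesConvergent_of_isCompact {y : ℕ → X} {K : Set (WeakSpace ℝ X)}
    (hK : IsCompact K) {C : ℝ} (hbdd : ∀ F : Finset ℕ, ‖∑ k ∈ F, y k‖ ≤ C)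
    (hmem : ∀ F : Finset ℕ, toWeakSpace ℝ X (∑ k ∈ F, y k) ∈ K) :
    WeaklySubseriesConvergent y := by
  intro m hm
  have hsum (F : Finset ℕ) : ∑ i ∈ F, y (m i) = ∑ k ∈ F.map ⟨m, hm.injective⟩, y k :=
    (Finset.sum_map F ⟨m, hm.injective⟩ y).symm
  have hsumm (f : StrongDual ℝ X) : Summable fun i => f (y (m i)) :=
    summable_apply_of_norm_sum_le (fun F => hsum F ▸ hbdd _) f
  obtain ⟨s, hs⟩ := exists_apply_eq_of_isCompact_weakSpace hK
    (s := fun n => ∑ i ∈ Finset.range n, y (m i)) (fun n => hsum _ ▸ hmem _)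
    (L := fun f => ∑' i, f (y (m i))) fun f => by
      simpa only [map_sum] using (hsumm f).hasSum.tendsto_sum_nat
  exact ⟨s, fun f => hs f ▸ (hsumm f).hasSum⟩

namespace WeaklySubseriesConvergent

variable {y : ℕ → X}

theorem comp_strictMono (hy : WeaklySubseriesConvergent y) {φ : ℕ → ℕ} (hφ : StrictMono φ) :
    WeaklySubseriesConvergent (y ∘ φ) :=
  fun m hm => hy (φ ∘ m) (hφ.comp hm)

theorem tendsto_apply_zero (hy : WeaklySubseriesConvergent y) (f : StrongDual ℝ X) :
    Tendsto (fun k => f (y k)) atTop (𝓝 0) := by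
  obtain ⟨s, hs⟩ := hy id strictMono_id
  exact (hs f).summable.tendsto_atTop_zero

theorem exists_norm_lt (hy : WeaklySubseriesConvergent y) {ε : ℝ} (hε : 0 < ε) :
    ∃ k, ‖y k‖ < ε := by
  by_contra! hbig
  choose f hf_norm hf_apply using fun k => exists_dual_vector'' ℝ (y k)
  simp only [RCLike.ofReal_real_eq_id, id] at hf_apply
  obtain ⟨g, hg⟩ := exists_mapClusterPt_toWeakDual (l := atTop) hf_norm
  set δ : ℕ → ℝ := fun i => ε / 16 * (1 / 2) ^ i
  have hδ : HasSum δ (ε / 8) := by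
    have := hasSum_geometric_two.mul_left (ε / 16)
    rwa [show ε / 16 * 2 = ε / 8 by ring] at this
  have hg_small : ∀ᶠ k in atTop, |g (y k)| < ε / 2 := by
    have := (hy.tendsto_apply_zero (WeakDual.toStrongDual g)).abs
    rw [abs_zero] at this
    exact this.eventually_lt_const (half_pos hε)
  obtain ⟨m, hm, hgm, hoff⟩ :=
    exists_strictMono_forall_ne_dist_lt hg hy.tendsto_apply_zero hg_small (δ := δ)
      fun i => by positivity
  obtain ⟨s, hs⟩ := hy m hm
  have hlarge (l : ℕ) : 3 * ε / 8 ≤ f (m l) s - g s := by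
    have hsum := (hs (f (m l))).sub (hs (WeakDual.toStrongDual g))
    have hclose := abs_tsum_sub_le_of_forall_ne hsum.summable hδ (fun i => by positivity) l
      fun i hi => (hoff l i hi).le
    rw [hsum.tsum_eq, hf_apply] at hclose
    have hdiag := hbig (m l)
    have hg_ml := abs_lt.1 (hgm l)
    have hrest := abs_le.1 hclose
    simp only [WeakDual.toStrongDual_apply] at hrest ⊢
    linarith
  obtain ⟨g', hg'⟩ := exists_mapClusterPt_toWeakDual (l := atTop) fun l => hf_norm (m l)
  have hg'_large : 3 * ε / 8 ≤ g' s - g s :=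
    (isClosed_le continuous_const ((WeakDual.eval_continuous s).sub continuous_const)
      ).mem_of_mapClusterPt hg' (Eventually.of_forall hlarge)
  have hg'_near (i : ℕ) : dist (g' (y (m i))) (g (y (m i))) ≤ δ i :=
    (isClosed_closedBall.preimage (WeakDual.eval_continuous _)).mem_of_mapClusterPt hg'
      ((eventually_gt_atTop i).mono fun l hl => (hoff l i hl.ne).le)
  have hg'_small : g' s - g s ≤ ε / 8 :=
    calc g' s - g s = ∑' i, (g' (y (m i)) - g (y (m i))) :=
          ((hs (WeakDual.toStrongDual g')).sub (hs (WeakDual.toStrongDual g))).tsum_eq.symm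
      _ ≤ ε / 8 := (le_abs_self _).trans <| tsum_of_norm_bounded hδ fun i => by
          rw [Real.norm_eq_abs, ← Real.dist_eq]
          exact hg'_near i
  linarith

theorem tendsto_norm_zero (hy : WeaklySubseriesConvergent y) :
    Tendsto (fun k => ‖y k‖) atTop (𝓝 0) := by
  refine tendsto_order.2 ⟨fun a ha => Eventually.of_forall fun k => ha.trans_le (norm_nonneg _),
    fun ε hε => ?_⟩
  by_contra hfreq
  obtain ⟨φ, hφ, hbig⟩ := extraction_of_frequently_atTop (not_eventually.1 hfreq)
  obtain ⟨k, hk⟩ := (hy.comp_strictMono hφ).exists_norm_lt hε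
  exact hbig k hk

end WeaklySubseriesConvergent

end WeakTopology

theorem weaklyCompact_isKB_general
    {E X : Type*} [NormedAddCommGroup E] [Lattice E] [IsOrderedAddMonoid E]
    [HasSolidNorm E] [NormedSpace ℝ E]
    [NormedAddCommGroup X] [NormedSpace ℝ X] [CompleteSpace X]
    (T : E →L[ℝ] X)
    (hT : IsCompact (closure (toWeakSpace ℝ X '' (T '' Metric.closedBall (0 : E) 1)))) :
    ∀ x : ℕ → E, (∀ n, 0 ≤ x n) → Monotone x → (∀ n, ‖x n‖ ≤ 1) →
      ∃ φ : ℕ → ℕ, StrictMono φ ∧ ∃ y : X,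
        Tendsto (fun n => T (x (φ n))) atTop (nhds y) := by
  intro x hpos hmono hnorm
  suffices CauchySeq fun n => T (x n) from ⟨id, strictMono_id, cauchySeq_tendsto_of_complete this⟩
  by_contra hcauchy
  obtain ⟨ε, hε, p, hp, hsep⟩ := exists_monotone_le_dist_of_not_cauchySeq hcauchy
  have hball (F : Finset ℕ) : ∑ k ∈ F, (x (p (k + 1)) - x (p k)) ∈ closedBall (0 : E) 1 :=
    mem_closedBall_zero_iff.2 <| (norm_sum_sub_le_of_monotone (x := x ∘ p) (hpos _)
      (hmono.comp hp) (Finset.subset_range_sup_succ F)).trans (hnorm _)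
  have hsub : WeaklySubseriesConvergent fun k => T (x (p (k + 1)) - x (p k)) := by
    refine weaklySubseriesConvergent_of_isCompact hT (C := ‖T‖) (fun F => ?_) fun F => ?_
    · simpa [← map_sum] using T.le_opNorm_of_le (mem_closedBall_zero_iff.1 (hball F))
    · rw [← map_sum]
      exact subset_closure ⟨_, ⟨_, hball F, rfl⟩, rfl⟩
  obtain ⟨k, hk⟩ := (hsub.tendsto_norm_zero.eventually_lt_const hε).exists
  rw [map_sub, ← dist_eq_norm] at hk
  exact (hsep k).not_gt hk

/-- Every weakly compact operator from a Banach lattice into a Banach space is a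
KB-operator: the image of every positive increasing sequence in the closed unit ball
has a norm convergent subsequence. -/
theorem weaklyCompact_isKB
    {E X : Type*} [NormedAddCommGroup E] [Lattice E] [IsOrderedAddMonoid E]
    [HasSolidNorm E] [NormedSpace ℝ E] [CompleteSpace E]
    [NormedAddCommGroup X] [NormedSpace ℝ X] [CompleteSpace X]
    (T : E →L[ℝ] X)
    (hT : IsCompact (closure (toWeakSpace ℝ X '' (T '' Metric.closedBall (0 : E) 1)))) :
    ∀ x : ℕ → E, (∀ n, 0 ≤ x n) → Monotone x → (∀ n, ‖x n‖ ≤ 1) →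
      ∃ φ : ℕ → ℕ, StrictMono φ ∧ ∃ y : X,
        Tendsto (fun n => T (x (φ n))) atTop (nhds y) :=
  weaklyCompact_isKB_general T hT
end

section
/- Let E be a normed vector lattice and F a Banach lattice (or Banach space). The set of KB-operators from E to F is a norm-closed subspace of the space B(E,F) of bounded linear operators: if T_n are KB-operators with ‖T_n − T‖ → 0, then T is a KB-operator. -/
open Filter Topology

/-!
For a positive increasing `x` in the unit ball, the KB property of `T` at `x` amounts to total
boundedness of the tail filter `map (fun m => T (x m)) atTop` (the filter rather than the range,
since only subsequences of `x` are controlled): if every subsequence has a Cauchy subsequence the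
filter is totally bounded, and in a complete space a totally bounded tail filter has a cluster
point, hence a convergent subsequence. As `‖Tₙ - S‖ → 0`, `m ↦ Tₙ (x m)` converges to
`m ↦ S (x m)` uniformly in `m`, and total boundedness passes to uniform limits by an `ε/2`
argument.
-/

section UniformSpace

variable {α : Type*} [UniformSpace α]

theorem Filter.TotallyBounded.exists_tendsto_subseq [CompleteSpace α]
    [FirstCountableTopology α] {u : ℕ → α} (hu : (Filter.map u atTop).TotallyBounded) :
    ∃ φ : ℕ → ℕ, StrictMono φ ∧ ∃ y, Tendsto (u ∘ φ) atTop (𝓝 y) := by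
  obtain ⟨y, hy⟩ := hu.exists_clusterPt
  obtain ⟨φ, hφ, hlim⟩ := MapClusterPt.tendsto_subseq hy
  exact ⟨φ, hφ, y, hlim⟩

theorem totallyBounded_map_atTop_of_forall_subseq {u : ℕ → α}
    (hu : ∀ φ : ℕ → ℕ, StrictMono φ → ∃ ψ : ℕ → ℕ, StrictMono ψ ∧ CauchySeq (u ∘ φ ∘ ψ)) :
    (map u atTop).TotallyBounded := by
  intro d hd
  -- otherwise a subsequence is `d`-separated, so none of its subsequences is Cauchy
  by_contra! hfar
  have hsep : ∀ s : Finset ℕ, ∃ j, ∀ i ∈ s, i < j ∧ (u j, u i) ∉ d := by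
    intro s
    have hfreq : ∃ᶠ j in atTop, u j ∉ d.preimage (u '' s) := by
      simpa [Filter.Frequently] using hfar (u '' s) (s.finite_toSet.image u)
    obtain ⟨j, hjd, hjs⟩ := (hfreq.and_eventually (eventually_gt_atTop (s.sup id))).exists
    exact ⟨j, fun i hi => ⟨(Finset.le_sup (f := id) hi).trans_lt hjs,
      fun hij => hjd ⟨u i, Set.mem_image_of_mem u hi, hij⟩⟩⟩
  obtain ⟨φ, -, hφ⟩ := exists_seq_of_forall_finset_exists (fun _ => True)
    (fun i j => i < j ∧ (u j, u i) ∉ d) (fun s _ => (hsep s).imp fun _ h => ⟨trivial, h⟩)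
  obtain ⟨ψ, hψ, hcauchy⟩ :=
    hu φ (strictMono_nat_of_lt_succ fun k => (hφ k (k + 1) k.lt_succ_self).1)
  obtain ⟨N, hN⟩ := cauchySeq_iff.1 hcauchy d hd
  exact (hφ _ _ (hψ N.lt_succ_self)).2 (hN (N + 1) N.le_succ N le_rfl)

theorem TendstoUniformly.totallyBounded_map {ι β : Type*} {F : ι → β → α} {f : β → α}
    {p : Filter ι} [p.NeBot] {l : Filter β} (hF : TendstoUniformly F f p)
    (h : ∀ i, (map (F i) l).TotallyBounded) : (map f l).TotallyBounded := by
  intro d hd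
  obtain ⟨V, hV, hVd⟩ := comp_mem_uniformity_sets hd
  obtain ⟨i, hi⟩ := (hF V hV).exists
  obtain ⟨t, ht, htl⟩ := h i V hV
  refine ⟨t, ht, mem_map.2 ?_⟩
  filter_upwards [mem_map.1 htl] with b ⟨y, hy, hby⟩
  exact ⟨y, hy, hVd ⟨F i b, hi b, hby⟩⟩

end UniformSpace

theorem ContinuousLinearMap.tendstoUniformly_apply_of_tendsto {𝕜 E F ι β : Type*}
    [NontriviallyNormedField 𝕜] [SeminormedAddCommGroup E] [NormedSpace 𝕜 E]
    [SeminormedAddCommGroup F] [NormedSpace 𝕜 F]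
    {p : Filter ι} {T : ι → E →L[𝕜] F} {S : E →L[𝕜] F} (hT : Tendsto T p (𝓝 S))
    {x : β → E} {C : ℝ} (hx : ∀ b, ‖x b‖ ≤ C) :
    TendstoUniformly (fun i b => T i (x b)) (fun b => S (x b)) p := by
  have hbound : Tendsto (fun i => ‖T i - S‖ * C) p (𝓝 0) := by
    simpa using (tendsto_iff_norm_sub_tendsto_zero.1 hT).mul_const C
  rw [Metric.tendstoUniformly_iff]
  intro ε hε
  filter_upwards [hbound.eventually (gt_mem_nhds hε)] with i hi b
  calc dist (S (x b)) (T i (x b)) = ‖(T i - S) (x b)‖ := by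
        rw [dist_comm, dist_eq_norm, sub_apply]
    _ ≤ ‖T i - S‖ * ‖x b‖ := (T i - S).le_opNorm (x b)
    _ ≤ ‖T i - S‖ * C := by gcongr; exact hx b
    _ < ε := hi

theorem KB_normClosed_general
    {E F : Type*} [NormedAddCommGroup E] [Lattice E] [NormedSpace ℝ E]
    [NormedAddCommGroup F] [NormedSpace ℝ F] [CompleteSpace F]
    (T : ℕ → E →L[ℝ] F) (S : E →L[ℝ] F)
    (hKB : ∀ n, ∀ x : ℕ → E, (∀ m, 0 ≤ x m) → Monotone x → (∀ m, ‖x m‖ ≤ 1) →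
      ∃ φ : ℕ → ℕ, StrictMono φ ∧ ∃ y : F,
        Tendsto (fun m => (T n) (x (φ m))) atTop (nhds y))
    (hlim : Tendsto (fun n => ‖T n - S‖) atTop (nhds 0)) :
    ∀ x : ℕ → E, (∀ m, 0 ≤ x m) → Monotone x → (∀ m, ‖x m‖ ≤ 1) →
      ∃ φ : ℕ → ℕ, StrictMono φ ∧ ∃ y : F,
        Tendsto (fun m => S (x (φ m))) atTop (nhds y) := by
  intro x hpos hmono hnorm
  have hTx : ∀ n, (map (fun m => T n (x m)) atTop).TotallyBounded := fun n =>
    totallyBounded_map_atTop_of_forall_subseq fun φ hφ =>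
      let ⟨ψ, hψ, _, hy⟩ :=
        hKB n (x ∘ φ) (fun _ => hpos _) (hmono.comp hφ.monotone) (fun _ => hnorm _)
      ⟨ψ, hψ, hy.cauchySeq⟩
  have hSx : (map (fun m => S (x m)) atTop).TotallyBounded :=
    (ContinuousLinearMap.tendstoUniformly_apply_of_tendsto
      (tendsto_iff_norm_sub_tendsto_zero.2 hlim) hnorm).totallyBounded_map hTx
  exact hSx.exists_tendsto_subseq

/-- The KB-operators from a normed vector lattice `E` into a Banach lattice `F` form a
norm-closed subspace of `B(E,F)`: an operator-norm limit of KB-operators is a KB-operator. -/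
theorem KB_normClosed
    {E F : Type*} [NormedAddCommGroup E] [Lattice E] [IsOrderedAddMonoid E] [HasSolidNorm E] [NormedSpace ℝ E]
    [NormedAddCommGroup F] [Lattice F] [IsOrderedAddMonoid F] [HasSolidNorm F] [NormedSpace ℝ F] [CompleteSpace F]
    (T : ℕ → E →L[ℝ] F) (S : E →L[ℝ] F)
    (hKB : ∀ n, ∀ x : ℕ → E, (∀ m, 0 ≤ x m) → Monotone x → (∀ m, ‖x m‖ ≤ 1) →
      ∃ φ : ℕ → ℕ, StrictMono φ ∧ ∃ y : F,
        Tendsto (fun m => (T n) (x (φ m))) atTop (nhds y))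
    (hlim : Tendsto (fun n => ‖T n - S‖) atTop (nhds 0)) :
    ∀ x : ℕ → E, (∀ m, 0 ≤ x m) → Monotone x → (∀ m, ‖x m‖ ≤ 1) →
      ∃ φ : ℕ → ℕ, StrictMono φ ∧ ∃ y : F,
        Tendsto (fun m => S (x (φ m))) atTop (nhds y) :=
  KB_normClosed_general T S hKB hlim
end

section
/- Let E be a normed vector lattice, F a Banach lattice which is a KB-space, and T : E → F an order bounded operator (whose modulus exists). Then T⁺, T⁻, T, and |T| are all KB-operators. -/
open Filter Topology Metric

/-! A positive operator maps a positive increasing norm-bounded sequence to a positive increasing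
norm-bounded sequence, which converges in a KB-space; so `T⁺ x_n` and `T⁻ x_n` converge, and hence
so do their difference `T x_n` and sum `|T| x_n`. No passage to a subsequence is needed. -/

def IsKBSpace (F : Type*) [NormedAddCommGroup F] [Preorder F] : Prop :=
  ∀ y : ℕ → F, (∀ n, 0 ≤ y n) → Monotone y → (∃ C : ℝ, ∀ n, ‖y n‖ ≤ C) →
    ∃ l : F, Tendsto y atTop (𝓝 l)

theorem IsKBSpace.exists_tendsto_map_of_monotone
    {E F : Type*} [NormedAddCommGroup E] [PartialOrder E] [IsOrderedAddMonoid E] [NormedSpace ℝ E]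
    [NormedAddCommGroup F] [PartialOrder F] [IsOrderedAddMonoid F] [NormedSpace ℝ F]
    (hF : IsKBSpace F) (P : E →L[ℝ] F) (hP : ∀ x, 0 ≤ x → 0 ≤ P x)
    {x : ℕ → E} (hx₀ : ∀ n, 0 ≤ x n) (hx : Monotone x) {C : ℝ} (hC : ∀ n, ‖x n‖ ≤ C) :
    ∃ l : F, Tendsto (fun n => P (x n)) atTop (𝓝 l) := by
  refine hF _ (fun n => hP _ (hx₀ n)) (((monotone_iff_map_nonneg P).2 hP).comp hx)
    ⟨‖P‖ * C, fun n => ?_⟩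
  calc ‖P (x n)‖ ≤ ‖P‖ * ‖x n‖ := P.le_opNorm _
    _ ≤ ‖P‖ * C := by gcongr; exact hC n

theorem orderBounded_into_KBspace_isKB_general
    {E F : Type*} [NormedAddCommGroup E] [Lattice E] [IsOrderedAddMonoid E] [NormedSpace ℝ E]
    [NormedAddCommGroup F] [Lattice F] [IsOrderedAddMonoid F] [NormedSpace ℝ F]
    (hKBspace : ∀ y : ℕ → F, (∀ n, 0 ≤ y n) → Monotone y →
      (∃ C : ℝ, ∀ n, ‖y n‖ ≤ C) → ∃ l : F, Tendsto y atTop (nhds l))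
    (T Tp Tm : E →L[ℝ] F)
    (hTp : ∀ x : E, 0 ≤ x → 0 ≤ Tp x) (hTm : ∀ x : E, 0 ≤ x → 0 ≤ Tm x)
    (hdecomp : ∀ x : E, T x = Tp x - Tm x) :
    ∀ S ∈ ({Tp, Tm, T, Tp + Tm} : Set (E →L[ℝ] F)),
      ∀ x : ℕ → E, (∀ n, 0 ≤ x n) → Monotone x → (∀ n, ‖x n‖ ≤ 1) →
        ∃ φ : ℕ → ℕ, StrictMono φ ∧ ∃ y : F,
          Tendsto (fun n => S (x (φ n))) atTop (nhds y) := by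
  intro S hS x hx₀ hx hx₁
  have hF : IsKBSpace F := hKBspace
  obtain ⟨lp, hlp⟩ := hF.exists_tendsto_map_of_monotone Tp hTp hx₀ hx hx₁
  obtain ⟨lm, hlm⟩ := hF.exists_tendsto_map_of_monotone Tm hTm hx₀ hx hx₁
  refine ⟨id, strictMono_id, ?_⟩
  simp only [Set.mem_insert_iff, Set.mem_singleton_iff] at hS
  rcases hS with rfl | rfl | rfl | rfl
  · exact ⟨lp, hlp⟩
  · exact ⟨lm, hlm⟩
  · exact ⟨lp - lm, by simpa only [id, hdecomp] using hlp.sub hlm⟩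
  · exact ⟨lp + lm, by simpa only [id, add_apply] using hlp.add hlm⟩

/-- Let `E` be a normed vector lattice and `F` a KB-space (every increasing norm-bounded
sequence of positive elements of `F` is norm convergent).  If `T : E → F` is order
bounded with modulus, i.e. `T = T⁺ - T⁻` for positive operators `T⁺, T⁻` (and
`|T| = T⁺ + T⁻`), then `T⁺`, `T⁻`, `T` and `|T|` are all KB-operators. -/
theorem orderBounded_into_KBspace_isKB
    {E F : Type*} [NormedAddCommGroup E] [Lattice E] [HasSolidNorm E] [IsOrderedAddMonoid E] [NormedSpace ℝ E]
    [NormedAddCommGroup F] [Lattice F] [HasSolidNorm F] [IsOrderedAddMonoid F] [NormedSpace ℝ F] [CompleteSpace F]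
    (hKBspace : ∀ y : ℕ → F, (∀ n, 0 ≤ y n) → Monotone y →
      (∃ C : ℝ, ∀ n, ‖y n‖ ≤ C) → ∃ l : F, Tendsto y atTop (nhds l))
    (T Tp Tm : E →L[ℝ] F)
    (hTp : ∀ x : E, 0 ≤ x → 0 ≤ Tp x) (hTm : ∀ x : E, 0 ≤ x → 0 ≤ Tm x)
    (hdecomp : ∀ x : E, T x = Tp x - Tm x) :
    ∀ S ∈ ({Tp, Tm, T, Tp + Tm} : Set (E →L[ℝ] F)),
      ∀ x : ℕ → E, (∀ n, 0 ≤ x n) → Monotone x → (∀ n, ‖x n‖ ≤ 1) →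
        ∃ φ : ℕ → ℕ, StrictMono φ ∧ ∃ y : F,
          Tendsto (fun n => S (x (φ n))) atTop (nhds y) :=
  orderBounded_into_KBspace_isKB_general hKBspace T Tp Tm hTp hTm hdecomp
end

section
/- Let E and F be Banach lattices and T : E → F an order bounded operator whose modulus |T| is a KB-operator. Then T is a KB-operator. -/
/-!
For `y ≥ 0` both `y` and `-y` lie in the order interval `[-y, y]`, so `±T y ≤ |T| y`, that is
`|T y| ≤ |T| y`, and the solid norm gives `‖T y‖ ≤ ‖|T| y‖`. Applied to the positive increments
`x n - x m` of an increasing sequence this bounds the distances of `(T x n)` by those of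
`(|T| x n)`, so a subsequence along which `(|T| x n)` converges is Cauchy for `T` as well, and
converges by completeness of `F`.
-/

open Filter Topology Metric

section OrderedGroup

variable {E F G : Type*} [AddCommGroup E] [Lattice E] [IsOrderedAddMonoid E]

theorem abs_apply_le_of_mem_upperBounds [AddCommGroup F] [Lattice F] [IsOrderedAddMonoid F]
    [FunLike G E F] [AddMonoidHomClass G E F] {T : G} {y : E} {m : F} (hy : 0 ≤ y)
    (hm : m ∈ upperBounds {z : F | ∃ w : E, |w| ≤ y ∧ z = T w}) : |T y| ≤ m :=
  abs_le'.2 ⟨hm ⟨y, (abs_of_nonneg hy).le, rfl⟩,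
    map_neg T y ▸ hm ⟨-y, (abs_neg y ▸ abs_of_nonneg hy).le, rfl⟩⟩

theorem norm_apply_le_of_mem_upperBounds [NormedAddCommGroup F] [Lattice F] [HasSolidNorm F]
    [IsOrderedAddMonoid F] [FunLike G E F] [AddMonoidHomClass G E F] {T : G} {y : E} {m : F}
    (hy : 0 ≤ y) (hm : m ∈ upperBounds {z : F | ∃ w : E, |w| ≤ y ∧ z = T w}) : ‖T y‖ ≤ ‖m‖ := by
  have habs := abs_apply_le_of_mem_upperBounds hy hm
  exact HasSolidNorm.solid (by rwa [abs_of_nonneg ((abs_nonneg _).trans habs)])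

end OrderedGroup

theorem dist_apply_le_dist_apply_of_monotone {ι E F G : Type*} [LinearOrder ι] [AddCommGroup E]
    [PartialOrder E] [IsOrderedAddMonoid E] [SeminormedAddCommGroup F] [FunLike G E F]
    [AddMonoidHomClass G E F] {T M : G} (hdom : ∀ y, 0 ≤ y → ‖T y‖ ≤ ‖M y‖) {x : ι → E}
    (hx : Monotone x) (m n : ι) : dist (T (x m)) (T (x n)) ≤ dist (M (x m)) (M (x n)) := by
  wlog hmn : m ≤ n generalizing m n
  · rw [dist_comm, dist_comm (M _)]
    exact this n m (le_of_not_ge hmn)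
  rw [dist_eq_norm', dist_eq_norm', ← map_sub, ← map_sub]
  exact hdom _ (sub_nonneg.2 (hx hmn))

theorem CauchySeq.of_dist_le {ι α β : Type*} [Nonempty ι] [SemilatticeSup ι]
    [PseudoMetricSpace α] [PseudoMetricSpace β] {u : ι → α} {v : ι → β} (hv : CauchySeq v)
    (h : ∀ m n, dist (u m) (u n) ≤ dist (v m) (v n)) : CauchySeq u := by
  rw [Metric.cauchySeq_iff] at hv ⊢
  intro ε hε
  obtain ⟨N, hN⟩ := hv ε hε
  exact ⟨N, fun m hm n hn => (h m n).trans_lt (hN m hm n hn)⟩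

theorem KB_of_modulus_KB_general
    {E F : Type*} [NormedAddCommGroup E] [Lattice E] [IsOrderedAddMonoid E] [NormedSpace ℝ E]
    [NormedAddCommGroup F] [Lattice F] [HasSolidNorm F] [IsOrderedAddMonoid F] [NormedSpace ℝ F] [CompleteSpace F]
    (T M : E →L[ℝ] F)
    (hMod : ∀ x : E, 0 ≤ x → IsLUB {z : F | ∃ y : E, |y| ≤ x ∧ z = T y} (M x))
    (hMKB : ∀ x : ℕ → E, (∀ n, 0 ≤ x n) → Monotone x → (∀ n, ‖x n‖ ≤ 1) →
      ∃ φ : ℕ → ℕ, StrictMono φ ∧ ∃ y : F,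
        Tendsto (fun n => M (x (φ n))) atTop (nhds y)) :
    ∀ x : ℕ → E, (∀ n, 0 ≤ x n) → Monotone x → (∀ n, ‖x n‖ ≤ 1) →
      ∃ φ : ℕ → ℕ, StrictMono φ ∧ ∃ y : F,
        Tendsto (fun n => T (x (φ n))) atTop (nhds y) := by
  intro x hpos hmono hbd
  obtain ⟨φ, hφ, L, hL⟩ := hMKB x hpos hmono hbd
  have hdom : ∀ y, 0 ≤ y → ‖T y‖ ≤ ‖M y‖ := fun y hy =>
    norm_apply_le_of_mem_upperBounds hy (hMod y hy).1
  have hdist := dist_apply_le_dist_apply_of_monotone hdom (hmono.comp hφ.monotone)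
  exact ⟨φ, hφ, cauchySeq_tendsto_of_complete (hL.cauchySeq.of_dist_le hdist)⟩

/-- If the modulus `|T|` of an order bounded operator `T` between Banach lattices is a
KB-operator, then `T` is a KB-operator.  The modulus `M = |T|` is characterized by the
Riesz–Kantorovich formula: `M x = sup {T y : |y| ≤ x}` for every `x ≥ 0`. -/
theorem KB_of_modulus_KB
    {E F : Type*} [NormedAddCommGroup E] [Lattice E] [HasSolidNorm E] [IsOrderedAddMonoid E] [NormedSpace ℝ E] [CompleteSpace E]
    [NormedAddCommGroup F] [Lattice F] [HasSolidNorm F] [IsOrderedAddMonoid F] [NormedSpace ℝ F] [CompleteSpace F]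
    (T M : E →L[ℝ] F)
    (hMod : ∀ x : E, 0 ≤ x → IsLUB {z : F | ∃ y : E, |y| ≤ x ∧ z = T y} (M x))
    (hMKB : ∀ x : ℕ → E, (∀ n, 0 ≤ x n) → Monotone x → (∀ n, ‖x n‖ ≤ 1) →
      ∃ φ : ℕ → ℕ, StrictMono φ ∧ ∃ y : F,
        Tendsto (fun n => M (x (φ n))) atTop (nhds y)) :
    ∀ x : ℕ → E, (∀ n, 0 ≤ x n) → Monotone x → (∀ n, ‖x n‖ ≤ 1) →
      ∃ φ : ℕ → ℕ, StrictMono φ ∧ ∃ y : F,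
        Tendsto (fun n => T (x (φ n))) atTop (nhds y) :=
  KB_of_modulus_KB_general T M hMod hMKB
end

section
/- Let S, T : E → F be positive operators between Banach lattices with 0 ≤ S ≤ T. If T is a KB-operator, then S is a KB-operator. -/
/-!
Along a subsequence on which `T xₙ` converges, `0 ≤ S (xₘ - xₙ) ≤ T (xₘ - xₙ)` for `n ≤ m`, so by
solidity of the norm `S xₙ` is Cauchy there whenever `T xₙ` is; completeness of `F` does the rest.
-/

open Filter Topology Metric

theorem norm_le_norm_of_nonneg_of_le {α : Type*} [NormedAddCommGroup α] [Lattice α]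
    [HasSolidNorm α] [IsOrderedAddMonoid α] {a b : α} (ha : 0 ≤ a) (hab : a ≤ b) :
    ‖a‖ ≤ ‖b‖ :=
  norm_le_norm_of_abs_le_abs <| by rwa [abs_of_nonneg ha, abs_of_nonneg (ha.trans hab)]

theorem norm_map_sub_le_of_dominated {E F G : Type*} [AddCommGroup E] [PartialOrder E]
    [IsOrderedAddMonoid E] [NormedAddCommGroup F] [Lattice F] [HasSolidNorm F]
    [IsOrderedAddMonoid F] [FunLike G E F] [AddMonoidHomClass G E F] {S T : G}
    (hS : ∀ x, 0 ≤ x → 0 ≤ S x) (hST : ∀ x, 0 ≤ x → S x ≤ T x) {x y : E} (hxy : x ≤ y) :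
    ‖S y - S x‖ ≤ ‖T y - T x‖ := by
  have hyx : 0 ≤ y - x := sub_nonneg.2 hxy
  simpa only [map_sub] using norm_le_norm_of_nonneg_of_le (hS _ hyx) (hST _ hyx)

theorem CauchySeq.of_dist_le_dist {α ι : Type*} [PseudoMetricSpace α] [Nonempty ι]
    [LinearOrder ι] {u v : ι → α} (hv : CauchySeq v)
    (h : ∀ m n, n ≤ m → dist (u m) (u n) ≤ dist (v m) (v n)) : CauchySeq u := by
  have h' : ∀ m n, dist (u m) (u n) ≤ dist (v m) (v n) := fun m n ↦ by
    rcases le_total n m with hnm | hmn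
    · exact h m n hnm
    · simpa only [dist_comm] using h n m hmn
  rw [Metric.cauchySeq_iff] at hv ⊢
  intro ε hε
  obtain ⟨N, hN⟩ := hv ε hε
  exact ⟨N, fun m hm n hn ↦ (h' m n).trans_lt (hN m hm n hn)⟩

theorem KB_of_dominated_general
    {E F : Type*} [NormedAddCommGroup E] [Lattice E] [IsOrderedAddMonoid E] [NormedSpace ℝ E]
    [NormedAddCommGroup F] [Lattice F] [HasSolidNorm F] [IsOrderedAddMonoid F] [NormedSpace ℝ F] [CompleteSpace F]
    (S T : E →L[ℝ] F)
    (hS : ∀ x : E, 0 ≤ x → 0 ≤ S x)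
    (hST : ∀ x : E, 0 ≤ x → S x ≤ T x)
    (hT : ∀ x : ℕ → E, (∀ n, 0 ≤ x n) → Monotone x → (∀ n, ‖x n‖ ≤ 1) →
      ∃ φ : ℕ → ℕ, StrictMono φ ∧ ∃ y : F,
        Tendsto (fun n => T (x (φ n))) atTop (nhds y)) :
    ∀ x : ℕ → E, (∀ n, 0 ≤ x n) → Monotone x → (∀ n, ‖x n‖ ≤ 1) →
      ∃ φ : ℕ → ℕ, StrictMono φ ∧ ∃ y : F,
        Tendsto (fun n => S (x (φ n))) atTop (nhds y) := by
  intro x hpos hmono hbd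
  obtain ⟨φ, hφ, _, hTφ⟩ := hT x hpos hmono hbd
  refine ⟨φ, hφ, cauchySeq_tendsto_of_complete (hTφ.cauchySeq.of_dist_le_dist ?_)⟩
  intro m n hnm
  simpa only [dist_eq_norm] using
    norm_map_sub_le_of_dominated hS hST (hmono (hφ.monotone hnm))

/-- Domination property: if `0 ≤ S ≤ T` are positive operators between Banach lattices
and `T` is a KB-operator, then `S` is a KB-operator. -/
theorem KB_of_dominated
    {E F : Type*} [NormedAddCommGroup E] [Lattice E] [HasSolidNorm E] [IsOrderedAddMonoid E] [NormedSpace ℝ E] [CompleteSpace E]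
    [NormedAddCommGroup F] [Lattice F] [HasSolidNorm F] [IsOrderedAddMonoid F] [NormedSpace ℝ F] [CompleteSpace F]
    (S T : E →L[ℝ] F)
    (hS : ∀ x : E, 0 ≤ x → 0 ≤ S x)
    (hST : ∀ x : E, 0 ≤ x → S x ≤ T x)
    (hT : ∀ x : ℕ → E, (∀ n, 0 ≤ x n) → Monotone x → (∀ n, ‖x n‖ ≤ 1) →
      ∃ φ : ℕ → ℕ, StrictMono φ ∧ ∃ y : F,
        Tendsto (fun n => T (x (φ n))) atTop (nhds y)) :
    ∀ x : ℕ → E, (∀ n, 0 ≤ x n) → Monotone x → (∀ n, ‖x n‖ ≤ 1) →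
      ∃ φ : ℕ → ℕ, StrictMono φ ∧ ∃ y : F,
        Tendsto (fun n => S (x (φ n))) atTop (nhds y) :=
  KB_of_dominated_general S T hS hST hT
end

section
/- Let E and F be Banach lattices where E has order continuous norm, let G be an order dense sublattice of E, and let T : E → F be a positive operator. If the restriction of T to G is a KB-operator (equivalently b-weakly compact on G), then T is a KB-operator on E. -/
/-!
Approximate each `x n` from below by some `g n ∈ G ∩ [0, x n]` with `‖x n - g n‖ → 0`: order
density makes `x n` the supremum of the upward directed set `G ∩ [0, x n]`, and order continuity
of the norm turns this supremum into a norm limit. The running suprema `g 0 ⊔ ⋯ ⊔ g n` are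
an increasing sequence in `G` squeezed between `g n` and `x n`, so `T` maps them to a convergent
sequence, and the images of `x n` differ from theirs by a null sequence.
-/

open Filter Topology Set

def HasOrderContinuousNorm (E : Type*) [NormedAddCommGroup E] [Lattice E] : Prop :=
  ∀ A : Set E, A.Nonempty → DirectedOn (· ≥ ·) A → IsGLB A 0 → ∀ ε > (0 : ℝ), ∃ a ∈ A, ‖a‖ < ε

section NormedLattice

variable {E : Type*} [NormedAddCommGroup E] [Lattice E] [IsOrderedAddMonoid E]

lemma HasOrderContinuousNorm.exists_norm_sub_lt (hoc : HasOrderContinuousNorm E) {S : Set E}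
    {x : E} (hne : S.Nonempty) (hdir : DirectedOn (· ≤ ·) S) (hS : IsLUB S x) {ε : ℝ}
    (hε : 0 < ε) : ∃ g ∈ S, ‖x - g‖ < ε := by
  have hglb : IsGLB ((x - ·) '' S) 0 := by
    have h := (OrderIso.subLeft x).isLUB_image'.2 hS
    rwa [OrderIso.subLeft_apply, sub_self] at h
  obtain ⟨_, ⟨g, hg, rfl⟩, hlt⟩ :=
    hoc _ (hne.image _) (hdir.mono_comp fun _ _ h => sub_le_sub_left h x) hglb ε hε
  exact ⟨g, hg, hlt⟩

variable [HasSolidNorm E]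

lemma norm_le_norm_of_nonneg_of_le_s12 {a b : E} (ha : 0 ≤ a) (hab : a ≤ b) : ‖a‖ ≤ ‖b‖ :=
  norm_le_norm_of_abs_le_abs <| by rwa [abs_of_nonneg ha, abs_of_nonneg (ha.trans hab)]

lemma eq_zero_of_forall_nsmul_le [NormedSpace ℝ E] {x y : E} (hy : 0 ≤ y)
    (h : ∀ n : ℕ, n • y ≤ x) : y = 0 := by
  by_contra hne
  have hy' : 0 < ‖y‖ := norm_pos_iff.2 hne
  obtain ⟨n, hn⟩ := exists_nat_gt (‖x‖ / ‖y‖)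
  have hle : (n : ℝ) * ‖y‖ ≤ ‖x‖ := by
    simpa [RCLike.norm_nsmul ℝ] using norm_le_norm_of_nonneg_of_le_s12 (nsmul_nonneg hy n) (h n)
  exact ((div_lt_iff₀ hy').1 hn).not_ge hle

lemma isLUB_inter_Icc_of_orderDense [NormedSpace ℝ E] {G : Set E}
    (hGsmul : ∀ c : ℝ, ∀ a ∈ G, c • a ∈ G) (hGdense : ∀ x : E, 0 < x → ∃ y ∈ G, 0 < y ∧ y ≤ x)
    {x : E} (hx : 0 ≤ x) : IsLUB (G ∩ Icc 0 x) x := by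
  refine ⟨fun g hg => hg.2.2, fun z hz => ?_⟩
  by_contra hxz
  obtain ⟨g, hgG, hg, hgx⟩ := hGdense (x - x ⊓ z) (sub_pos.2 (inf_lt_left.2 hxz))
  have hz0 : 0 ≤ z := hz ⟨by simpa using hGsmul 0 g hgG, le_rfl, hx⟩
  -- `g ≤ x - x ⊓ z` lets each multiple of `g` below `x ⊓ z` climb one step further.
  have hmul : ∀ n : ℕ, n • g ≤ x ⊓ z := by
    intro n
    induction n with
    | zero => simpa using le_inf hx hz0
    | succ n ih =>
      have hle : (n + 1) • g ≤ x :=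
        calc (n + 1) • g = n • g + g := succ_nsmul g n
          _ ≤ x ⊓ z + (x - x ⊓ z) := add_le_add ih hgx
          _ = x := add_sub_cancel _ _
      have hmem : (n + 1) • g ∈ G := by
        rw [← Nat.cast_smul_eq_nsmul ℝ]
        exact hGsmul _ g hgG
      exact le_inf hle (hz ⟨hmem, nsmul_nonneg hg.le _, hle⟩)
  exact hg.ne' (eq_zero_of_forall_nsmul_le hg.le hmul)

lemma exists_mem_inter_Icc_norm_sub_lt [NormedSpace ℝ E] (hoc : HasOrderContinuousNorm E)
    {G : Set E} (hGsup : SupClosed G) (hGsmul : ∀ c : ℝ, ∀ a ∈ G, c • a ∈ G)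
    (hGdense : ∀ x : E, 0 < x → ∃ y ∈ G, 0 < y ∧ y ≤ x) (hG0 : (0 : E) ∈ G) {x : E}
    (hx : 0 ≤ x) {ε : ℝ} (hε : 0 < ε) : ∃ g ∈ G ∩ Icc 0 x, ‖x - g‖ < ε := by
  have hIcc : SupClosed (Icc 0 x) := by
    intro a ha b hb
    exact ⟨le_sup_of_le_left ha.1, sup_le ha.2 hb.2⟩
  exact hoc.exists_norm_sub_lt (S := G ∩ Icc 0 x) ⟨0, hG0, le_rfl, hx⟩
    (hGsup.inter hIcc).directedOn (isLUB_inter_Icc_of_orderDense hGsmul hGdense hx) hε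

lemma tendsto_sub_partialSups {x g : ℕ → E} (hx : Monotone x) (hg : ∀ n, g n ≤ x n)
    (h : Tendsto (fun n => x n - g n) atTop (𝓝 0)) :
    Tendsto (fun n => x n - partialSups g n) atTop (𝓝 0) := by
  refine squeeze_zero_norm (fun n => ?_) (by simpa using h.norm)
  have hle : partialSups g n ≤ x n := partialSups_le g n _ fun k hk => (hg k).trans (hx hk)
  exact norm_le_norm_of_nonneg_of_le_s12 (sub_nonneg.2 hle)
    (sub_le_sub_left (le_partialSups g n) _)

end NormedLattice

lemma partialSups_mem_inter_Icc {α : Type*} [Lattice α] [Zero α] {G : Set α} (hG : SupClosed G)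
    {x g : ℕ → α} (hx : Monotone x) (hg : ∀ n, g n ∈ G ∩ Icc 0 (x n)) (n : ℕ) :
    partialSups g n ∈ G ∩ Icc 0 (x n) := by
  induction n with
  | zero => simpa using hg 0
  | succ n ih =>
    rw [partialSups_add_one]
    exact ⟨hG ih.1 (hg _).1, ih.2.1.trans le_sup_left,
      sup_le (ih.2.2.trans (hx n.le_succ)) (hg _).2.2⟩

theorem KB_of_KB_on_orderDense_general
    {E F : Type*} [NormedAddCommGroup E] [Lattice E] [HasSolidNorm E] [IsOrderedAddMonoid E] [NormedSpace ℝ E]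
    [NormedAddCommGroup F] [NormedSpace ℝ F]
    -- `E` has order continuous norm:
    (hoc : ∀ A : Set E, A.Nonempty → DirectedOn (· ≥ ·) A → IsGLB A 0 →
      ∀ ε > (0 : ℝ), ∃ a ∈ A, ‖a‖ < ε)
    -- `G` is a sublattice (and subspace) of `E`:
    (G : Set E)
    (hGlat : ∀ a ∈ G, ∀ b ∈ G, a ⊔ b ∈ G ∧ a ⊓ b ∈ G)
    (hGsmul : ∀ (c : ℝ), ∀ a ∈ G, c • a ∈ G)
    -- `G` is order dense in `E`:
    (hGdense : ∀ x : E, 0 < x → ∃ y ∈ G, 0 < y ∧ y ≤ x)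
    (T : E →L[ℝ] F)
    -- the restriction of `T` to `G` is a KB-operator:
    (hTG : ∀ x : ℕ → E, (∀ n, x n ∈ G) → (∀ n, 0 ≤ x n) → Monotone x →
      (∀ n, ‖x n‖ ≤ 1) → ∃ y : F, Tendsto (fun n => T (x n)) atTop (nhds y)) :
    ∀ x : ℕ → E, (∀ n, 0 ≤ x n) → Monotone x → (∀ n, ‖x n‖ ≤ 1) →
      ∃ y : F, Tendsto (fun n => T (x n)) atTop (nhds y) := by
  intro x hx0 hxmono hxbd
  rcases G.eq_empty_or_nonempty with rfl | ⟨g₀, hg₀⟩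
  · have hx : ∀ n, x n = 0 := fun n =>
      ((hx0 n).lt_or_eq.resolve_left fun h => by simpa using hGdense _ h).symm
    exact ⟨0, by simp [hx]⟩
  have hGsup : SupClosed G := fun a ha b hb => (hGlat a ha b hb).1
  have hG0 : (0 : E) ∈ G := by simpa using hGsmul 0 g₀ hg₀
  choose g hg hgx using fun n : ℕ => exists_mem_inter_Icc_norm_sub_lt hoc hGsup hGsmul hGdense
    hG0 (hx0 n) (Nat.one_div_pos_of_nat (α := ℝ) (n := n))
  have hgx_tendsto : Tendsto (fun n => x n - g n) atTop (𝓝 0) :=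
    squeeze_zero_norm (fun n => (hgx n).le) tendsto_one_div_add_atTop_nhds_zero_nat
  have hps := partialSups_mem_inter_Icc hGsup hxmono hg
  obtain ⟨y, hy⟩ := hTG (partialSups g) (fun n => (hps n).1) (fun n => (hps n).2.1)
    (partialSups_monotone g)
    (fun n => (norm_le_norm_of_nonneg_of_le_s12 (hps n).2.1 (hps n).2.2).trans (hxbd n))
  have hT : Tendsto (fun n => T (x n - partialSups g n)) atTop (𝓝 0) :=
    (T.continuous.tendsto' 0 0 T.map_zero).comp
      (tendsto_sub_partialSups hxmono (fun n => (hg n).2.2) hgx_tendsto)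
  exact ⟨y, by simpa using hy.add hT⟩

/-- Let `E`, `F` be Banach lattices with `E` having order continuous norm, `G` an order
dense sublattice of `E`, and `T : E → F` a positive operator.  If the restriction of `T`
to `G` is a KB-operator, then `T` is a KB-operator on `E`.  (For a positive operator,
being a KB-operator is expressed by norm convergence of the images of positive increasing
norm-bounded sequences.) -/
theorem KB_of_KB_on_orderDense
    {E F : Type*} [NormedAddCommGroup E] [Lattice E] [HasSolidNorm E] [IsOrderedAddMonoid E] [NormedSpace ℝ E] [CompleteSpace E]
    [NormedAddCommGroup F] [Lattice F] [HasSolidNorm F] [IsOrderedAddMonoid F] [NormedSpace ℝ F] [CompleteSpace F]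
    -- `E` has order continuous norm:
    (hoc : ∀ A : Set E, A.Nonempty → DirectedOn (· ≥ ·) A → IsGLB A 0 →
      ∀ ε > (0 : ℝ), ∃ a ∈ A, ‖a‖ < ε)
    -- `G` is a sublattice (and subspace) of `E`:
    (G : Set E)
    (hGlat : ∀ a ∈ G, ∀ b ∈ G, a ⊔ b ∈ G ∧ a ⊓ b ∈ G)
    (hGadd : ∀ a ∈ G, ∀ b ∈ G, a + b ∈ G) (hGsmul : ∀ (c : ℝ), ∀ a ∈ G, c • a ∈ G)
    -- `G` is order dense in `E`:
    (hGdense : ∀ x : E, 0 < x → ∃ y ∈ G, 0 < y ∧ y ≤ x)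
    (T : E →L[ℝ] F) (hpos : ∀ x : E, 0 ≤ x → 0 ≤ T x)
    -- the restriction of `T` to `G` is a KB-operator:
    (hTG : ∀ x : ℕ → E, (∀ n, x n ∈ G) → (∀ n, 0 ≤ x n) → Monotone x →
      (∀ n, ‖x n‖ ≤ 1) → ∃ y : F, Tendsto (fun n => T (x n)) atTop (nhds y)) :
    ∀ x : ℕ → E, (∀ n, 0 ≤ x n) → Monotone x → (∀ n, ‖x n‖ ≤ 1) →
      ∃ y : F, Tendsto (fun n => T (x n)) atTop (nhds y) :=
  KB_of_KB_on_orderDense_general hoc G hGlat hGsmul hGdense T hTG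
end

section
/- Let E be a Banach lattice with a strong order unit e and order continuous norm, and let F be a Dedekind complete Banach lattice. Then every bounded linear operator T : E → F is a KB-operator. -/
/-!
A norm-bounded set is order bounded: the closed order intervals `[-n e, n e]` cover `E`, so by
Baire one of them has interior and hence some multiple of it absorbs the unit ball. So the
sequence is monotone and order bounded, and order continuity makes it norm Cauchy: the
differences `z - x k` with `z` an upper bound form a downward directed set with infimum `0`, so
some `z - x k` is small, and it dominates every later `x m - x k`. By completeness `x`
converges, and so does `T ∘ x`.
-/

open Filter Topology Metric
open scoped Pointwise

section LatticeOrderedGroup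

variable {α : Type*} [Lattice α] [AddCommGroup α] [IsOrderedAddMonoid α]

lemma nonneg_of_two_pow_nsmul_nonneg {y : α} (k : ℕ) (h : 0 ≤ 2 ^ k • y) : 0 ≤ y := by
  induction k with
  | zero => simpa using h
  | succ k ih => exact ih (nsmul_two_semiclosed (by rwa [pow_succ', mul_nsmul'] at h))

lemma sub_nsmul_mem_upperBounds {s : Set α} {w z : α}
    (hw : ∀ z ∈ upperBounds s, ∀ a ∈ s, w ≤ z - a) (hz : z ∈ upperBounds s) (n : ℕ) :
    z - n • w ∈ upperBounds s := by
  induction n with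
  | zero => simpa using hz
  | succ n ih =>
    intro a ha
    rw [succ_nsmul, ← sub_sub]
    exact le_sub_comm.mp (hw _ ih a ha)

lemma directedOn_ge_upperBounds_sub {s : Set α} (hs : DirectedOn (· ≤ ·) s) :
    DirectedOn (· ≥ ·) (upperBounds s - s) := by
  rintro _ ⟨z₁, hz₁, a₁, ha₁, rfl⟩ _ ⟨z₂, hz₂, a₂, ha₂, rfl⟩
  obtain ⟨a, ha, h₁, h₂⟩ := hs a₁ ha₁ a₂ ha₂
  refine ⟨z₁ ⊓ z₂ - a, ⟨z₁ ⊓ z₂, fun b hb => le_inf (hz₁ hb) (hz₂ hb), a, ha, rfl⟩, ?_, ?_⟩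
  · exact sub_le_sub inf_le_left h₁
  · exact sub_le_sub inf_le_right h₂

end LatticeOrderedGroup

lemma abs_smul_le_smul_abs {M : Type*} [Lattice M] [AddCommGroup M] [Module ℝ M]
    [PosSMulMono ℝ M] {c : ℝ} (hc : 0 ≤ c) (y : M) : |c • y| ≤ c • |y| :=
  sup_le (smul_le_smul_of_nonneg_left (le_abs_self y) hc)
    (by rw [← smul_neg]; exact smul_le_smul_of_nonneg_left (neg_le_abs y) hc)

section ClosedPositiveCone

variable {E : Type*} [AddCommGroup E] [Lattice E] [IsOrderedAddMonoid E] [Module ℝ E]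

lemma dyadic_smul_nonneg {x : E} (hx : 0 ≤ x) (a k : ℕ) : 0 ≤ ((a : ℝ) / 2 ^ k) • x := by
  apply nonneg_of_two_pow_nsmul_nonneg k
  rw [← Nat.cast_smul_eq_nsmul ℝ, smul_smul, Nat.cast_pow, Nat.cast_ofNat,
    mul_div_cancel₀ _ (by positivity), Nat.cast_smul_eq_nsmul]
  exact nsmul_nonneg hx a

-- `HasSolidNorm` and `IsOrderedAddMonoid` say nothing about real scalars; compatibility of the
-- order with them comes from closedness of the positive cone, by dyadic approximation.
lemma PosSMulMono.of_closedIciTopology [TopologicalSpace E] [ContinuousSMul ℝ E]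
    [ClosedIciTopology E] : PosSMulMono ℝ E := by
  refine PosSMulMono.of_smul_nonneg fun c hc x hx => ?_
  have hdyadic : Tendsto (fun k : ℕ => (⌊c * 2 ^ k⌋₊ : ℝ) / 2 ^ k) atTop (𝓝 c) :=
    (tendsto_nat_floor_mul_div_atTop hc).comp (tendsto_pow_atTop_atTop_of_one_lt one_lt_two)
  exact isClosed_Ici.mem_of_tendsto (hdyadic.smul_const x)
    (Eventually.of_forall fun k => dyadic_smul_nonneg hx _ k)

end ClosedPositiveCone

section NormedLattice

variable {E : Type*} [NormedAddCommGroup E] [Lattice E] [HasSolidNorm E] [IsOrderedAddMonoid E]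
  [NormedSpace ℝ E]

attribute [local instance] PosSMulMono.of_closedIciTopology

lemma eq_zero_of_forall_nsmul_le_s13 {a b : E} (ha : 0 ≤ a) (h : ∀ n : ℕ, n • a ≤ b) :
    a = 0 := by
  have hbound : ∀ n : ℕ, n * ‖a‖ ≤ ‖b‖ := fun n => by
    have hna : 0 ≤ n • a := nsmul_nonneg ha n
    calc (n : ℝ) * ‖a‖ = ‖n • a‖ := by
          rw [← Nat.cast_smul_eq_nsmul ℝ, norm_smul, Real.norm_natCast]
      _ ≤ ‖b‖ := norm_le_norm_of_abs_le_abs <| by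
        rw [abs_of_nonneg hna, abs_of_nonneg (hna.trans (h n))]
        exact h n
  by_contra hne
  obtain ⟨n, hn⟩ := exists_nat_gt (‖b‖ / ‖a‖)
  have hpos : 0 < ‖a‖ := norm_pos_iff.mpr hne
  exact (hbound n).not_gt ((div_lt_iff₀ hpos).mp hn)

lemma isGLB_upperBounds_sub {s : Set E} (hs : s.Nonempty) (hbdd : BddAbove s) :
    IsGLB (upperBounds s - s) 0 := by
  refine ⟨?_, fun v hv => ?_⟩
  · rintro _ ⟨z, hz, a, ha, rfl⟩
    exact sub_nonneg.mpr (hz ha)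
  -- `v⁺` lies below every `z - a`, so `z - n • v⁺` stays an upper bound for every `n`.
  have hw : ∀ z ∈ upperBounds s, ∀ a ∈ s, v⁺ ≤ z - a := fun z hz a ha =>
    sup_le (hv ⟨z, hz, a, ha, rfl⟩) (sub_nonneg.mpr (hz ha))
  obtain ⟨u, hu⟩ := hbdd
  obtain ⟨a, ha⟩ := hs
  have hzero : v⁺ = 0 := eq_zero_of_forall_nsmul_le_s13 (posPart_nonneg v) fun n =>
    le_sub_comm.mp (sub_nsmul_mem_upperBounds hw hu n ha)
  exact hzero ▸ le_posPart v

lemma cauchySeq_of_monotone_of_bddAbove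
    (hoc : ∀ A : Set E, A.Nonempty → DirectedOn (· ≥ ·) A → IsGLB A 0 →
      ∀ ε > (0 : ℝ), ∃ a ∈ A, ‖a‖ < ε)
    {x : ℕ → E} (hmono : Monotone x) (hbdd : BddAbove (Set.range x)) : CauchySeq x := by
  rw [Metric.cauchySeq_iff']
  intro ε hε
  obtain ⟨_, ⟨z, hz, _, ⟨k, rfl⟩, rfl⟩, hsmall⟩ :=
    hoc _ (Set.Nonempty.sub hbdd (Set.range_nonempty x))
      (directedOn_ge_upperBounds_sub (directedOn_range.mpr hmono.directed_le))
      (isGLB_upperBounds_sub (Set.range_nonempty x) hbdd) ε hε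
  refine ⟨k, fun m hm => lt_of_le_of_lt ?_ hsmall⟩
  have hinc : 0 ≤ x m - x k := sub_nonneg.mpr (hmono hm)
  have hdom : x m - x k ≤ z - x k := sub_le_sub_right (hz ⟨m, rfl⟩) _
  rw [dist_eq_norm]
  exact norm_le_norm_of_abs_le_abs <| by
    rwa [abs_of_nonneg hinc, abs_of_nonneg (hinc.trans hdom)]

lemma exists_abs_le_smul_of_norm_le_one [CompleteSpace E] {e : E} (he : 0 ≤ e)
    (hunit : ∀ x : E, ∃ lam : ℝ, 0 < lam ∧ |x| ≤ lam • e) :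
    ∃ c : ℝ, ∀ y : E, ‖y‖ ≤ 1 → |y| ≤ c • e := by
  have hclosed : ∀ n : ℕ, IsClosed {y : E | |y| ≤ (n : ℝ) • e} := fun n =>
    isClosed_le (continuous_id.sup continuous_neg) continuous_const
  have hcover : ⋃ n : ℕ, {y : E | |y| ≤ (n : ℝ) • e} = Set.univ :=
    Set.eq_univ_of_forall fun y => by
      obtain ⟨lam, -, hle⟩ := hunit y
      exact Set.mem_iUnion.mpr
        ⟨⌈lam⌉₊, hle.trans (smul_le_smul_of_nonneg_right (Nat.le_ceil lam) he)⟩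
  obtain ⟨n, x₀, hx₀⟩ := nonempty_interior_of_iUnion_of_closed hclosed hcover
  obtain ⟨r, hr, hball⟩ := Metric.isOpen_iff.mp isOpen_interior x₀ hx₀
  have hball : ball x₀ r ⊆ {y : E | |y| ≤ (n : ℝ) • e} := hball.trans interior_subset
  have hsmall : ∀ z : E, ‖z‖ < r → |z| ≤ (2 * n : ℝ) • e := fun z hz => by
    have hshift : x₀ + z ∈ ball x₀ r := by simpa [dist_eq_norm] using hz
    calc |z| = |(x₀ + z) + -x₀| := by rw [add_neg_cancel_comm]
      _ ≤ |x₀ + z| + |x₀| := (abs_add_le _ _).trans_eq (by rw [abs_neg])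
      _ ≤ (n : ℝ) • e + (n : ℝ) • e := add_le_add (hball hshift) (hball (mem_ball_self hr))
      _ = (2 * n : ℝ) • e := by rw [← add_smul, two_mul]
  refine ⟨2 / r * (2 * n), fun y hy => ?_⟩
  have hscaled : ‖(r / 2) • y‖ < r := by
    rw [norm_smul, Real.norm_of_nonneg (by positivity)]
    nlinarith
  have hinv : 2 / r * (r / 2) = 1 := by field_simp
  calc |y| = |(2 / r) • (r / 2) • y| := by rw [smul_smul, hinv, one_smul]
    _ ≤ (2 / r) • |(r / 2) • y| := abs_smul_le_smul_abs (by positivity) _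
    _ ≤ (2 / r) • (2 * n : ℝ) • e :=
      smul_le_smul_of_nonneg_left (hsmall _ hscaled) (by positivity)
    _ = (2 / r * (2 * n)) • e := smul_smul _ _ _

end NormedLattice

theorem all_bounded_isKB_of_unit_orderContinuous_general
    {E F : Type*} [NormedAddCommGroup E] [Lattice E] [HasSolidNorm E] [IsOrderedAddMonoid E] [NormedSpace ℝ E] [CompleteSpace E]
    [NormedAddCommGroup F] [NormedSpace ℝ F]
    -- `E` has a strong order unit `e`:
    (e : E) (he : 0 ≤ e) (hunit : ∀ x : E, ∃ lam : ℝ, 0 < lam ∧ |x| ≤ lam • e)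
    -- `E` has order continuous norm:
    (hoc : ∀ A : Set E, A.Nonempty → DirectedOn (· ≥ ·) A → IsGLB A 0 →
      ∀ ε > (0 : ℝ), ∃ a ∈ A, ‖a‖ < ε)
    (T : E →L[ℝ] F) :
    ∀ x : ℕ → E, (∀ n, 0 ≤ x n) → Monotone x → (∀ n, ‖x n‖ ≤ 1) →
      ∃ φ : ℕ → ℕ, StrictMono φ ∧ ∃ y : F,
        Tendsto (fun n => T (x (φ n))) atTop (nhds y) := by
  intro x _ hmono hnorm
  obtain ⟨c, hc⟩ := exists_abs_le_smul_of_norm_le_one he hunit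
  have hbdd : BddAbove (Set.range x) :=
    ⟨c • e, Set.forall_mem_range.mpr fun k => (le_abs_self _).trans (hc _ (hnorm k))⟩
  obtain ⟨y, hy⟩ :=
    cauchySeq_tendsto_of_complete (cauchySeq_of_monotone_of_bddAbove hoc hmono hbdd)
  exact ⟨id, strictMono_id, T y, (T.continuous.tendsto y).comp hy⟩

/-- If `E` is a Banach lattice with a strong order unit and order continuous norm and
`F` is a Dedekind complete Banach lattice, then every bounded linear operator
`T : E → F` is a KB-operator. -/
theorem all_bounded_isKB_of_unit_orderContinuous
    {E F : Type*} [NormedAddCommGroup E] [Lattice E] [HasSolidNorm E] [IsOrderedAddMonoid E] [NormedSpace ℝ E] [CompleteSpace E]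
    [NormedAddCommGroup F] [Lattice F] [HasSolidNorm F] [IsOrderedAddMonoid F] [NormedSpace ℝ F] [CompleteSpace F]
    -- `E` has a strong order unit `e`:
    (e : E) (he : 0 ≤ e) (hunit : ∀ x : E, ∃ lam : ℝ, 0 < lam ∧ |x| ≤ lam • e)
    -- `E` has order continuous norm:
    (hoc : ∀ A : Set E, A.Nonempty → DirectedOn (· ≥ ·) A → IsGLB A 0 →
      ∀ ε > (0 : ℝ), ∃ a ∈ A, ‖a‖ < ε)
    -- `F` is Dedekind complete:
    (hDed : ∀ A : Set F, A.Nonempty → BddAbove A → ∃ l : F, IsLUB A l)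
    (T : E →L[ℝ] F) :
    ∀ x : ℕ → E, (∀ n, 0 ≤ x n) → Monotone x → (∀ n, ‖x n‖ ≤ 1) →
      ∃ φ : ℕ → ℕ, StrictMono φ ∧ ∃ y : F,
        Tendsto (fun n => T (x (φ n))) atTop (nhds y) :=
  all_bounded_isKB_of_unit_orderContinuous_general e he hunit hoc T
end
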